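/- Let K = F_2, k ≥ 1, and let A be a connected graded K-algebra with A_n = 0 for all n ≥ 3, with a basis {a_1, …, a_{2k+1}} of A_1 and a basis {e} of A_2, whose multiplication on basis elements is given by a_1·a_1 = e, a_{2l}·a_{2l+1} = a_{2l+1}·a_{2l} = e for 1 ≤ l ≤ k, and a_i·a_j = 0 for all other pairs (i, j). (A is the mod-2 cohomology algebra of a Demushkin pro-2 group on 2k+1 generators with invariant q = 2, with the basis of Serre.) Define σ(1) = 1, σ(i) = i + 1 for i even, and σ(i) = i − 1 for odd i > 1. Then: (i) for every i, the colon ideal (0) : a_i equals the left ideal of A generated by { a_j : j ≠ σ(i) }; (ii) for every nonempty subset Y ⊆ {a_1, …, a_{2k+1}} and every a_i ∉ Y, the colon ideal (Y) : a_i equals the augmentation ideal A_+, which is the left ideal generated by {a_1, …, a_{2k+1}}. In particular, A is strongly Koszul with respect to {a_1, …, a_{2k+1}}. -/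

import Mathlib

/-- The colon ideal `I : x = {a | a * x ∈ I}` of a left ideal `I` by an element `x`. -/
def colonIdeal {A : Type*} [Ring A] (I : Ideal A) (x : A) : Ideal A :=
  Submodule.comap (LinearMap.toSpanSingleton A A x) I

/-- The augmentation ideal `A_+` of a connected graded algebra. -/
def augIdeal {K A : Type*} [Field K] [Ring A] [Algebra K A]
    (𝒜 : ℕ → Submodule K A) : Ideal A :=
  Ideal.span (⋃ n : ℕ, ((𝒜 (n + 1) : Submodule K A) : Set A))

/-- `A` is strongly Koszul with respect to a set `X` of (homogeneous) generators of the
augmentation ideal `P`: `X` generates `P`, no proper subset of `X` generates `P`, and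
for every `Y ⊊ X` and `x ∈ X \ Y` the colon ideal `(Y) : x` is generated by a subset of
`X`. -/
def StronglyKoszulWrt {A : Type*} [Ring A] (P : Ideal A) (X : Set A) : Prop :=
  Ideal.span X = P ∧ (∀ Y ⊂ X, Ideal.span Y ≠ P) ∧
    ∀ Y ⊂ X, ∀ z ∈ X \ Y, ∃ Z ⊆ X, colonIdeal (Ideal.span Y) z = Ideal.span Z

/-- The pairing involution of Serre's basis, in 0-based indexing:
`σ(0) = 0`, odd index ↦ index + 1, even index `> 0` ↦ index − 1
(1-based: `σ(1) = 1`, `σ(i) = i + 1` for even `i`, `σ(i) = i − 1` for odd `i > 1`). -/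
def sigma19 (j : ℕ) : ℕ := if j = 0 then 0 else if Odd j then j + 1 else j - 1

/-!
Write `x = c + x₁ + x₂` with `c ∈ K` and `xₙ ∈ A_n`. The degree-`d` component of an element
`Σ rⱼ yⱼ` of the left ideal `(Y)`, for `Y ⊆ A_d`, is `Σ (rⱼ)₀ yⱼ ∈ span_K Y`; in particular the
degree-1 component `c • aᵢ` of `x * aᵢ ∈ (Y)` lies in `span_K Y`, so linear independence forces
`c = 0` when `aᵢ ∉ Y`, i.e. `x ∈ A_+`. Conversely `A_+ · aᵢ ⊆ K e ⊆ (Y)` as soon as `Y ∋ a_m`,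
since `e = a_{σ(m)} a_m`. For `Y = ∅` one also needs the degree-2 component `x₁ * aᵢ`, which is
the `a_{σ(i)}`-coordinate of `x₁` times `e`: it vanishes exactly on `span {aⱼ : j ≠ σ(i)}`.
The same degree-1 argument shows that no proper subset of the `aᵢ` generates `A_+`.
-/

open DirectSum

theorem mem_colonIdeal {A : Type*} [Ring A] {I : Ideal A} {x y : A} :
    y ∈ colonIdeal I x ↔ y * x ∈ I :=
  Iff.rfl

theorem span_le_colonIdeal {A : Type*} [Ring A] {I : Ideal A} {x : A} {S : Set A} :
    Ideal.span S ≤ colonIdeal I x ↔ ∀ s ∈ S, s * x ∈ I :=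
  Ideal.span_le

theorem LinearIndependent.notMem_span_of_subset_range {K V ι : Type*} [Ring K] [Nontrivial K]
    [AddCommGroup V] [Module K V] {v : ι → V} (hv : LinearIndependent K v) {Y : Set V}
    (hY : Y ⊆ Set.range v) {i : ι} (hi : v i ∉ Y) : v i ∉ Submodule.span K Y := by
  have hsub : Y ⊆ v '' {j | j ≠ i} := by
    rintro _ hy
    obtain ⟨j, rfl⟩ := hY hy
    exact ⟨j, fun hji => hi (hji ▸ hy), rfl⟩
  exact fun h => hv.notMem_span_image (fun hii : i ≠ i => hii rfl) (Submodule.span_mono hsub h)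

theorem mem_span_image_ne_of_map_eq_zero {K V W ι : Type*} [DivisionRing K] [AddCommMonoid V]
    [Module K V] [AddCommMonoid W] [Module K W] {v : ι → V}
    {f : V →ₗ[K] W} {s : ι} (hf : ∀ j ≠ s, f (v j) = 0) (hs : f (v s) ≠ 0) {x : V}
    (hx : x ∈ Submodule.span K (Set.range v)) (hfx : f x = 0) :
    x ∈ Submodule.span K (v '' {j | j ≠ s}) := by
  have hrange : Set.range v = insert (v s) (v '' {j | j ≠ s}) := by
    ext y; constructor
    · rintro ⟨j, rfl⟩
      by_cases hj : j = s
      · exact Or.inl (hj ▸ rfl)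
      · exact Or.inr ⟨j, hj, rfl⟩
    · rintro (rfl | ⟨j, -, rfl⟩) <;> exact Set.mem_range_self _
  rw [hrange, Submodule.mem_span_insert] at hx
  obtain ⟨c, z, hz, rfl⟩ := hx
  have hfz : f z = 0 := by
    have : Submodule.span K (v '' {j | j ≠ s}) ≤ LinearMap.ker f := by
      rw [Submodule.span_le]
      rintro _ ⟨j, hj, rfl⟩
      exact hf j hj
    exact this hz
  rw [map_add, map_smul, hfz, add_zero, smul_eq_zero] at hfx
  rw [hfx.resolve_right hs, zero_smul, zero_add]
  exact hz

section Graded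

variable {K A : Type*} [Field K] [Ring A] [Algebra K A] {𝒜 : ℕ → Submodule K A}
  [GradedAlgebra 𝒜]

theorem augIdeal_eq_irrelevant : augIdeal 𝒜 = (HomogeneousIdeal.irrelevant 𝒜).toIdeal := by
  rw [HomogeneousIdeal.irrelevant_eq_span, augIdeal]
  congr 1
  ext x
  simp only [Set.mem_iUnion, SetLike.mem_coe, exists_prop]
  constructor
  · rintro ⟨n, hn⟩
    exact ⟨n + 1, n.succ_pos, hn⟩
  · rintro ⟨n, hn, hx⟩
    obtain ⟨m, rfl⟩ := Nat.exists_eq_succ_of_ne_zero hn.ne'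
    exact ⟨m, hx⟩

theorem mem_augIdeal_iff {x : A} : x ∈ augIdeal 𝒜 ↔ (decompose 𝒜 x 0 : A) = 0 := by
  rw [augIdeal_eq_irrelevant]
  exact HomogeneousIdeal.mem_irrelevant_iff 𝒜 x

theorem sum_range_decompose {N : ℕ} (hN : ∀ n, N ≤ n → 𝒜 n = ⊥) (x : A) :
    ∑ n ∈ Finset.range N, (decompose 𝒜 x n : A) = x := by
  classical
  conv_rhs => rw [← sum_support_decompose 𝒜 x]
  refine (Finset.sum_subset (fun n hn => ?_) fun n _ hn => ?_).symm
  · by_contra hnN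
    have hbot := hN n (by simpa using hnN)
    exact (DFinsupp.mem_support_iff.1 hn) (Subtype.ext (by
      simpa [hbot] using (decompose 𝒜 x n).2))
  · rw [DFinsupp.notMem_support_iff.1 hn, ZeroMemClass.coe_zero]

theorem decompose_one_add_decompose_two (htop : ∀ n, 3 ≤ n → 𝒜 n = ⊥) {x : A}
    (hx : x ∈ augIdeal 𝒜) : (decompose 𝒜 x 1 : A) + decompose 𝒜 x 2 = x := by
  conv_rhs => rw [← sum_range_decompose htop x]
  simp [Finset.sum_range_succ, mem_augIdeal_iff.1 hx]

theorem exists_decompose_zero_eq_algebraMap (hconn : 𝒜 0 = 1) (x : A) :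
    ∃ c : K, (decompose 𝒜 x 0 : A) = algebraMap K A c := by
  have h : (decompose 𝒜 x 0 : A) ∈ (1 : Submodule K A) := hconn ▸ (decompose 𝒜 x 0).2
  rw [Submodule.one_eq_range] at h
  obtain ⟨c, hc⟩ := h
  exact ⟨c, hc.symm⟩

theorem decompose_mem_span_of_mem_span (hconn : 𝒜 0 = 1) {d : ℕ} {Y : Set A}
    (hY : Y ⊆ 𝒜 d) {x : A} (hx : x ∈ Ideal.span Y) :
    (decompose 𝒜 x d : A) ∈ Submodule.span K Y := by
  -- `Ideal.span Y` is not closed under `decompose 𝒜 · d`, so induct on all left multiples.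
  suffices ∀ r, (decompose 𝒜 (r * x) d : A) ∈ Submodule.span K Y by simpa using this 1
  induction hx using Submodule.span_induction with
  | mem y hy =>
    intro r
    obtain ⟨c, hc⟩ := exists_decompose_zero_eq_algebraMap hconn r
    rw [coe_decompose_mul_of_right_mem_of_le 𝒜 (hY hy) le_rfl, Nat.sub_self, hc,
      ← Algebra.smul_def]
    exact Submodule.smul_mem _ c (Submodule.subset_span hy)
  | zero => simp
  | add y z _ _ hy hz =>
    intro r
    rw [mul_add, decompose_add, DirectSum.add_apply, Submodule.coe_add]
    exact add_mem (hy r) (hz r)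
  | smul s y _ hy =>
    intro r
    rw [smul_eq_mul, ← mul_assoc]
    exact hy (r * s)

theorem mem_augIdeal_of_mul_mem_span (hconn : 𝒜 0 = 1) {d : ℕ} {Y : Set A} (hY : Y ⊆ 𝒜 d)
    {x r : A} (hx : x ∈ 𝒜 d) (hxY : x ∉ Submodule.span K Y) (h : r * x ∈ Ideal.span Y) :
    r ∈ augIdeal 𝒜 := by
  obtain ⟨c, hc⟩ := exists_decompose_zero_eq_algebraMap hconn r
  have hcx : c • x ∈ Submodule.span K Y := by
    have := decompose_mem_span_of_mem_span hconn hY h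
    rwa [coe_decompose_mul_of_right_mem_of_le 𝒜 hx le_rfl, Nat.sub_self, hc,
      ← Algebra.smul_def] at this
  have hc0 : c = 0 := by
    by_contra hc0
    exact hxY ((Submodule.smul_mem_iff _ hc0).1 hcx)
  rw [mem_augIdeal_iff, hc, hc0, map_zero]

end Graded

section Pairing

variable {K A ι : Type*} [Field K] [Ring A] [Algebra K A] {𝒜 : ℕ → Submodule K A}
  [GradedAlgebra 𝒜] {a : ι → A} {σ : ι → ι} {e : A}

theorem mem_span_of_pairing [DecidableEq ι]
    (hmul : ∀ i j, a j * a i = if j = σ i then e else 0) {Y : Set A} {m : ι} (hm : a m ∈ Y) :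
    e ∈ Ideal.span Y := by
  have h : a (σ m) * a m = e := by rw [hmul, if_pos rfl]
  exact h ▸ Ideal.mul_mem_left _ _ (Ideal.subset_span hm)

theorem mem_of_mem_augIdeal (htop : ∀ n, 3 ≤ n → 𝒜 n = ⊥)
    (hspan2 : 𝒜 2 = K ∙ e) {I : Ideal A} (he : e ∈ I) {x : A} (hx : x ∈ augIdeal 𝒜)
    (h1 : (decompose 𝒜 x 1 : A) ∈ I) : x ∈ I := by
  have h2 : 𝒜 2 ≤ I.restrictScalars K := by
    rw [hspan2]
    exact (Submodule.span_singleton_le_iff_mem e _).2 he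
  rw [← decompose_one_add_decompose_two htop hx]
  exact add_mem h1 (h2 (decompose 𝒜 x 2).2)

theorem augIdeal_eq_span_range [Nonempty ι] [DecidableEq ι]
    (htop : ∀ n, 3 ≤ n → 𝒜 n = ⊥) (ha1 : ∀ i, a i ∈ 𝒜 1)
    (hspan1 : Submodule.span K (Set.range a) = 𝒜 1) (hspan2 : 𝒜 2 = K ∙ e)
    (hmul : ∀ i j, a j * a i = if j = σ i then e else 0) :
    augIdeal 𝒜 = Ideal.span (Set.range a) := by
  refine le_antisymm (fun x hx => ?_) (Ideal.span_le.2 ?_)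
  · refine mem_of_mem_augIdeal htop hspan2
      (mem_span_of_pairing hmul (Set.mem_range_self (Classical.arbitrary ι))) hx ?_
    exact Submodule.span_le_restrictScalars K A _ (hspan1.symm ▸ (decompose 𝒜 x 1).2)
  · rintro _ ⟨i, rfl⟩
    exact Ideal.subset_span (Set.mem_iUnion_of_mem 0 (ha1 i))

theorem colonIdeal_bot_eq [Nontrivial ι] [DecidableEq ι] (hconn : 𝒜 0 = 1)
    (htop : ∀ n, 3 ≤ n → 𝒜 n = ⊥) (ha1 : ∀ i, a i ∈ 𝒜 1) (hindep : LinearIndependent K a)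
    (hspan1 : Submodule.span K (Set.range a) = 𝒜 1) (hspan2 : 𝒜 2 = K ∙ e) (hene : e ≠ 0)
    (hmul : ∀ i j, a j * a i = if j = σ i then e else 0) (i : ι) :
    colonIdeal ⊥ (a i) = Ideal.span (a '' {j | j ≠ σ i}) := by
  refine le_antisymm (fun x hx => ?_) (span_le_colonIdeal.2 ?_)
  · rw [mem_colonIdeal, Ideal.mem_bot] at hx
    have hxaug : x ∈ augIdeal 𝒜 :=
      mem_augIdeal_of_mul_mem_span hconn (Set.empty_subset _) (ha1 i)
        (by simpa using hindep.ne_zero i) (by simp [hx])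
    have h1 : (decompose 𝒜 x 1 : A) * a i = 0 := by
      simpa [hx] using (coe_decompose_mul_of_right_mem_of_le 𝒜 (ha1 i) one_le_two (a := x)).symm
    obtain ⟨j, hj⟩ := exists_ne (σ i)
    have hx1 : (decompose 𝒜 x 1 : A) ∈ Submodule.span K (Set.range a) :=
      hspan1.symm ▸ (decompose 𝒜 x 1).2
    refine mem_of_mem_augIdeal htop hspan2 (mem_span_of_pairing hmul (Set.mem_image_of_mem a hj))
      hxaug (Submodule.span_le_restrictScalars K A _ ?_)
    refine mem_span_image_ne_of_map_eq_zero (f := LinearMap.mulRight K (a i))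
      (fun j hj => ?_) ?_ hx1 h1
    · simp [hmul, hj]
    · simpa [hmul] using hene
  · rintro _ ⟨j, hj, rfl⟩
    rw [hmul, if_neg hj]
    exact zero_mem _

theorem colonIdeal_span_eq_augIdeal [DecidableEq ι] (hconn : 𝒜 0 = 1)
    (ha1 : ∀ i, a i ∈ 𝒜 1) (hindep : LinearIndependent K a)
    (hmul : ∀ i j, a j * a i = if j = σ i then e else 0)
    (haug : augIdeal 𝒜 = Ideal.span (Set.range a)) {Y : Set A} (hY : Y ⊆ Set.range a)
    (hYne : Y.Nonempty) {i : ι} (hi : a i ∉ Y) :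
    colonIdeal (Ideal.span Y) (a i) = augIdeal 𝒜 := by
  refine le_antisymm (fun x hx => ?_) ?_
  · refine mem_augIdeal_of_mul_mem_span hconn (fun y hy => ?_) (ha1 i)
      (hindep.notMem_span_of_subset_range hY hi) hx
    obtain ⟨j, rfl⟩ := hY hy
    exact ha1 j
  · obtain ⟨y, hy⟩ := hYne
    obtain ⟨m, rfl⟩ := hY hy
    rw [haug, span_le_colonIdeal]
    rintro _ ⟨j, rfl⟩
    rw [hmul]
    split_ifs
    · exact mem_span_of_pairing hmul hy
    · exact zero_mem _

theorem stronglyKoszulWrt_range (hconn : 𝒜 0 = 1) (ha1 : ∀ i, a i ∈ 𝒜 1)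
    (hindep : LinearIndependent K a) (haug : augIdeal 𝒜 = Ideal.span (Set.range a))
    (hcolon_bot : ∀ i, ∃ Z ⊆ Set.range a, colonIdeal ⊥ (a i) = Ideal.span Z)
    (hcolon : ∀ Y ⊆ Set.range a, Y.Nonempty → ∀ i, a i ∉ Y →
      colonIdeal (Ideal.span Y) (a i) = augIdeal 𝒜) :
    StronglyKoszulWrt (augIdeal 𝒜) (Set.range a) := by
  refine ⟨haug.symm, fun Y hY hspan => ?_, fun Y hY z ⟨⟨i, hz⟩, hzY⟩ => ?_⟩
  · obtain ⟨_, ⟨i, rfl⟩, hi⟩ := Set.exists_of_ssubset hY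
    have hY1 : Y ⊆ 𝒜 1 := fun y hy => by
      obtain ⟨j, rfl⟩ := hY.subset hy
      exact ha1 j
    have h := decompose_mem_span_of_mem_span hconn hY1
      (hspan ▸ haug ▸ Ideal.subset_span (Set.mem_range_self i))
    rw [decompose_of_mem_same 𝒜 (ha1 i)] at h
    exact hindep.notMem_span_of_subset_range hY.subset hi h
  · subst hz
    rcases Y.eq_empty_or_nonempty with rfl | hYne
    · simpa using hcolon_bot i
    · exact ⟨Set.range a, subset_rfl, haug ▸ hcolon Y hY.subset hYne i hzY⟩

end Pairing

theorem sigma19_lt {n i : ℕ} (h : i < 2 * n + 1) : sigma19 i < 2 * n + 1 := by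
  unfold sigma19
  split_ifs with h0 hodd
  · omega
  · obtain ⟨m, rfl⟩ := hodd
    omega
  · omega

theorem eq_sigma19_iff {i j : ℕ} :
    j = sigma19 i ↔ (j = 0 ∧ i = 0) ∨ (i = j + 1 ∧ Odd j) ∨ (j = i + 1 ∧ Odd i) := by
  unfold sigma19
  simp only [Nat.odd_iff]
  split_ifs <;> omega

def sigma19Fin (k : ℕ) (i : Fin (2 * k + 1)) : Fin (2 * k + 1) :=
  ⟨sigma19 i, sigma19_lt i.isLt⟩

theorem stmt19_general {A : Type*} [Ring A] [Algebra (ZMod 2) A]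
    (𝒜 : ℕ → Submodule (ZMod 2) A) [GradedAlgebra 𝒜]
    (hconn : 𝒜 0 = 1)
    (htop : ∀ n, 3 ≤ n → 𝒜 n = ⊥)
    (k : ℕ) (hk : 1 ≤ k)
    (a : Fin (2 * k + 1) → A) (ha1 : ∀ i, a i ∈ 𝒜 1)
    (hindep : LinearIndependent (ZMod 2) a)
    (hspan1 : Submodule.span (ZMod 2) (Set.range a) = 𝒜 1)
    (e : A) (hene : e ≠ 0)
    (hspan2 : 𝒜 2 = Submodule.span (ZMod 2) {e})
    (hmul : ∀ i j : Fin (2 * k + 1), a i * a j =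
      if (i : ℕ) = 0 ∧ (j : ℕ) = 0 then e
      else if ((j : ℕ) = (i : ℕ) + 1 ∧ Odd (i : ℕ))
            ∨ ((i : ℕ) = (j : ℕ) + 1 ∧ Odd (j : ℕ)) then e
      else 0) :
    (∀ i : Fin (2 * k + 1), colonIdeal (⊥ : Ideal A) (a i)
        = Ideal.span (a '' {j : Fin (2 * k + 1) | (j : ℕ) ≠ sigma19 (i : ℕ)}))
    ∧ (∀ Y : Set A, Y ⊆ Set.range a → Y.Nonempty → ∀ i : Fin (2 * k + 1), a i ∉ Y →
        colonIdeal (Ideal.span Y) (a i) = augIdeal 𝒜)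
    ∧ augIdeal 𝒜 = Ideal.span (Set.range a)
    ∧ StronglyKoszulWrt (augIdeal 𝒜) (Set.range a) := by
  have hpair : ∀ i j, a j * a i = if j = sigma19Fin k i then e else 0 := fun i j => by
    rw [hmul, ← ite_or]
    exact if_congr (eq_sigma19_iff.symm.trans (Fin.ext_iff (b := sigma19Fin k i)).symm) rfl rfl
  have : Nontrivial (Fin (2 * k + 1)) := Fin.nontrivial_iff_two_le.2 (by omega)
  have haug := augIdeal_eq_span_range htop ha1 hspan1 hspan2 hpair
  have hcolon_bot (i : Fin (2 * k + 1)) : colonIdeal ⊥ (a i)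
      = Ideal.span (a '' {j : Fin (2 * k + 1) | (j : ℕ) ≠ sigma19 (i : ℕ)}) := by
    rw [colonIdeal_bot_eq hconn htop ha1 hindep hspan1 hspan2 hene hpair i]
    simp only [ne_eq, Fin.ext_iff, sigma19Fin]
  have hcolon : ∀ Y ⊆ Set.range a, Y.Nonempty → ∀ i, a i ∉ Y →
      colonIdeal (Ideal.span Y) (a i) = augIdeal 𝒜 := fun _ hY hYne _ hi =>
    colonIdeal_span_eq_augIdeal hconn ha1 hindep hpair haug hY hYne hi
  exact ⟨hcolon_bot, hcolon, haug, stronglyKoszulWrt_range hconn ha1 hindep haug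
    (fun i => ⟨_, Set.image_subset_range _ _, hcolon_bot i⟩) hcolon⟩

/-- Let `A` be the mod-2 cohomology algebra of a Demushkin pro-2 group
on `2k + 1` generators with invariant `q = 2`: a connected graded `F₂`-algebra with
`A_n = 0` for `n ≥ 3`, a basis `a_1, …, a_{2k+1}` of `A_1` (0-based: `a 0, …, a 2k`) and
a basis `{e}` of `A_2` with `a_1·a_1 = e`, `a_{2l}·a_{2l+1} = a_{2l+1}·a_{2l} = e` and
all other products of basis vectors zero.  Then (i) `(0) : a_i = ({a_j : j ≠ σ(i)})`;
(ii) for every nonempty `Y ⊆ {a_1, …, a_{2k+1}}` and every `a_i ∉ Y`,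
`(Y) : a_i = A_+`, which is the left ideal generated by `{a_1, …, a_{2k+1}}`.
In particular `A` is strongly Koszul with respect to `{a_1, …, a_{2k+1}}`. -/
theorem stmt19 {A : Type*} [Ring A] [Algebra (ZMod 2) A]
    (𝒜 : ℕ → Submodule (ZMod 2) A) [GradedAlgebra 𝒜]
    (hconn : 𝒜 0 = 1)
    (htop : ∀ n, 3 ≤ n → 𝒜 n = ⊥)
    (k : ℕ) (hk : 1 ≤ k)
    (a : Fin (2 * k + 1) → A) (ha1 : ∀ i, a i ∈ 𝒜 1)
    (hindep : LinearIndependent (ZMod 2) a)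
    (hspan1 : Submodule.span (ZMod 2) (Set.range a) = 𝒜 1)
    (e : A) (he2 : e ∈ 𝒜 2) (hene : e ≠ 0)
    (hspan2 : 𝒜 2 = Submodule.span (ZMod 2) {e})
    (hmul : ∀ i j : Fin (2 * k + 1), a i * a j =
      if (i : ℕ) = 0 ∧ (j : ℕ) = 0 then e
      else if ((j : ℕ) = (i : ℕ) + 1 ∧ Odd (i : ℕ))
            ∨ ((i : ℕ) = (j : ℕ) + 1 ∧ Odd (j : ℕ)) then e
      else 0) :
    (∀ i : Fin (2 * k + 1), colonIdeal (⊥ : Ideal A) (a i)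
        = Ideal.span (a '' {j : Fin (2 * k + 1) | (j : ℕ) ≠ sigma19 (i : ℕ)}))
    ∧ (∀ Y : Set A, Y ⊆ Set.range a → Y.Nonempty → ∀ i : Fin (2 * k + 1), a i ∉ Y →
        colonIdeal (Ideal.span Y) (a i) = augIdeal 𝒜)
    ∧ augIdeal 𝒜 = Ideal.span (Set.range a)
    ∧ StronglyKoszulWrt (augIdeal 𝒜) (Set.range a) :=
  stmt19_general 𝒜 hconn htop k hk a ha1 hindep hspan1 e hene hspan2 hmul
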